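/- Suppose ∑_{b∈L} r_b < t_max. For every feasible assignment {t_b}_{b∈L} with ∑_{b∈L} t_b = t_max that is not a solution of problem (B), there exists a finite sequence of feasible assignments starting at {t_b} and ending at a solution of (B), such that each assignment in the sequence is obtained from the previous one by increasing one coordinate by 1 and decreasing another coordinate by 1, and the objective value ∑_{b∈L} E(r_b,t_b) is strictly increasing along the sequence. -/

import Mathlib

/-- `betaP p t r = ∑_{i=0}^{r-1} C(t,i) (1-p)^i p^(t-i)`. -/
noncomputable def betaP (p : ℝ) (t r : ℕ) : ℝ :=
  ∑ i ∈ Finset.range r, (t.choose i : ℝ) * (1 - p) ^ i * p ^ (t - i)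

/-- Expected rank function `E(r,t) = ∑_{i=0}^{t} C(t,i) (1-p)^i p^(t-i) * min{i,r}`. -/
noncomputable def expRank (p : ℝ) (r t : ℕ) : ℝ :=
  ∑ i ∈ Finset.range (t + 1),
    (t.choose i : ℝ) * (1 - p) ^ i * p ^ (t - i) * ((min i r : ℕ) : ℝ)

/-!
By Pascal's rule the marginal gain `E(r, t+1) - E(r, t)` equals `(1-p) · P(Bin(t, 1-p) < r)`,
which is nonincreasing in `t`; so every `E(r, ·)` is concave. For a separable concave objective
under a sum constraint, an assignment admitting no improving unit transfer is therefore globally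
optimal, because one threshold separates the marginals of the coordinates any competitor lowers
from those it raises. The objective takes finitely many values on feasible assignments, so
greedily performing improving transfers reaches a solution.
-/

open Finset

noncomputable def binomWeight (p : ℝ) (t i : ℕ) : ℝ :=
  (t.choose i : ℝ) * (1 - p) ^ i * p ^ (t - i)

namespace binomWeight

variable {p : ℝ}

lemma nonneg (hp0 : 0 ≤ p) (hp1 : p ≤ 1) (t i : ℕ) : 0 ≤ binomWeight p t i := by
  unfold binomWeight
  have : 0 ≤ 1 - p := sub_nonneg.2 hp1
  positivity

lemma eq_zero_of_lt {t i : ℕ} (h : t < i) : binomWeight p t i = 0 := by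
  simp [binomWeight, Nat.choose_eq_zero_of_lt h]

lemma succ_zero (t : ℕ) : binomWeight p (t + 1) 0 = p * binomWeight p t 0 := by
  simp [binomWeight, pow_succ, mul_comm]

lemma succ_succ (t i : ℕ) :
    binomWeight p (t + 1) (i + 1) = (1 - p) * binomWeight p t i + p * binomWeight p t (i + 1) := by
  rcases lt_or_ge i t with h | h
  · obtain ⟨k, rfl⟩ := Nat.exists_eq_add_of_lt h
    simp only [binomWeight, Nat.choose_succ_succ, Nat.cast_add,
      show i + k + 1 + 1 - (i + 1) = k + 1 by omega, show i + k + 1 - i = k + 1 by omega,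
      show i + k + 1 - (i + 1) = k by omega]
    ring
  · rw [eq_zero_of_lt (show t < i + 1 by omega)]
    simp only [binomWeight, Nat.choose_succ_succ, Nat.cast_add,
      Nat.choose_eq_zero_of_lt (show t < i + 1 by omega), show t + 1 - (i + 1) = t - i by omega]
    ring

/-- Pascal's rule `w(t+1, i+1) = (1-p) w(t, i) + p w(t, i+1)`, summed against a weight `g`. -/
lemma sum_succ_mul (g : ℕ → ℝ) (t n : ℕ) :
    ∑ i ∈ range (n + 1), binomWeight p (t + 1) i * g i
      = p * ∑ i ∈ range (n + 1), binomWeight p t i * g i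
        + (1 - p) * ∑ i ∈ range n, binomWeight p t i * g (i + 1) := by
  rw [sum_range_succ' _ n, sum_range_succ' (fun i => binomWeight p t i * g i) n]
  simp only [succ_succ, succ_zero, add_mul, sum_add_distrib, mul_add, mul_sum, mul_assoc]
  ring

end binomWeight

lemma betaP_eq_sum (p : ℝ) (t r : ℕ) : betaP p t r = ∑ i ∈ range r, binomWeight p t i := rfl

lemma expRank_eq_sum (p : ℝ) (r t : ℕ) :
    expRank p r t = ∑ i ∈ range (t + 1), binomWeight p t i * (min i r : ℕ) := rfl

lemma betaP_eq_sum_range_succ (p : ℝ) (t r : ℕ) :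
    betaP p t r = ∑ i ∈ range (t + 1), binomWeight p t i * (if i < r then 1 else 0) := by
  simp only [mul_ite, mul_one, mul_zero, ← sum_filter, betaP_eq_sum]
  refine (sum_subset (fun i hi => by simp at hi ⊢; omega) fun i hi hi' => ?_).symm
  exact binomWeight.eq_zero_of_lt (by simp at hi hi'; omega)

lemma betaP_succ_succ (p : ℝ) (t r : ℕ) :
    betaP p (t + 1) (r + 1) = p * betaP p t (r + 1) + (1 - p) * betaP p t r := by
  simpa [betaP_eq_sum] using binomWeight.sum_succ_mul (p := p) (fun _ => 1) t r

lemma expRank_succ (p : ℝ) (r t : ℕ) :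
    expRank p r (t + 1) = expRank p r t + (1 - p) * betaP p t r := by
  have hmin (i : ℕ) : ((min (i + 1) r : ℕ) : ℝ) = (min i r : ℕ) + if i < r then 1 else 0 := by
    split_ifs
    · rw [show min (i + 1) r = min i r + 1 by omega]; push_cast; ring
    · rw [show min (i + 1) r = min i r by omega, add_zero]
  rw [expRank_eq_sum, binomWeight.sum_succ_mul, sum_range_succ _ (t + 1),
    binomWeight.eq_zero_of_lt (Nat.lt_succ_self t), zero_mul, add_zero]
  simp only [hmin, mul_add, sum_add_distrib, ← expRank_eq_sum, ← betaP_eq_sum_range_succ]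
  ring

lemma betaP_le_betaP_succ {p : ℝ} (hp0 : 0 ≤ p) (hp1 : p ≤ 1) (t r : ℕ) :
    betaP p t r ≤ betaP p t (r + 1) := by
  rw [betaP_eq_sum, betaP_eq_sum, sum_range_succ]
  linarith [binomWeight.nonneg hp0 hp1 t r]

lemma betaP_antitone {p : ℝ} (hp0 : 0 ≤ p) (hp1 : p ≤ 1) (r : ℕ) :
    Antitone fun t => betaP p t r := by
  refine antitone_nat_of_succ_le fun t => ?_
  cases r with
  | zero => simp [betaP]
  | succ r =>
    rw [betaP_succ_succ]
    nlinarith [betaP_le_betaP_succ hp0 hp1 t r]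

lemma expRank_succ_sub_antitone {p : ℝ} (hp0 : 0 ≤ p) (hp1 : p ≤ 1) (r : ℕ) :
    Antitone fun t => expRank p r (t + 1) - expRank p r t := by
  simp only [expRank_succ, add_sub_cancel_left]
  exact (betaP_antitone hp0 hp1 r).const_mul (sub_nonneg.2 hp1)

section ConcaveSequence

variable {f : ℕ → ℝ}

lemma le_add_mul_of_succ_sub_le (hf : Antitone fun n => f (n + 1) - f n) {n : ℕ} {c : ℝ}
    (hc : f (n + 1) - f n ≤ c) (k : ℕ) :
    f (n + k) ≤ f n + k * c := by
  induction k with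
  | zero => simp
  | succ k ih =>
    have := hf (Nat.le_add_right n k)
    push_cast
    rw [← add_assoc]
    linarith

lemma add_mul_le_of_le_succ_sub (hf : Antitone fun n => f (n + 1) - f n) {m : ℕ} {c : ℝ} (k : ℕ)
    (hc : c ≤ f (m + k + 1) - f (m + k)) :
    f m + (k + 1) * c ≤ f (m + k + 1) := by
  induction k with
  | zero => simp only [Nat.cast_zero, zero_add, one_mul, add_zero] at hc ⊢; linarith
  | succ k ih =>
    have := ih (hc.trans (hf (Nat.le_succ (m + k))))
    push_cast
    rw [← add_assoc] at hc ⊢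
    linarith

/-- `c` is a supergradient of the concave sequence `f` at `n`. -/
lemma le_add_sub_mul_of_supergradient (hf : Antitone fun n => f (n + 1) - f n) {m n : ℕ} {c : ℝ}
    (hup : n ≤ m → f (n + 1) - f n ≤ c) (hdown : m < n → c ≤ f n - f (n - 1)) :
    f m ≤ f n + ((m : ℝ) - n) * c := by
  rcases le_or_gt n m with h | h
  · obtain ⟨k, rfl⟩ := Nat.exists_eq_add_of_le h
    have := le_add_mul_of_succ_sub_le hf (hup h) k
    push_cast
    linarith
  · obtain ⟨k, rfl⟩ := Nat.exists_eq_add_of_lt h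
    have := add_mul_le_of_le_succ_sub hf k (by simpa using hdown h)
    push_cast
    linarith

end ConcaveSequence

def IsUnitTransfer {ι : Type*} (L : Finset ι) (s s' : ι → ℕ) : Prop :=
  ∃ a ∈ L, ∃ b ∈ L, a ≠ b ∧ s' a = s a + 1 ∧ s b = s' b + 1 ∧ ∀ x, x ≠ a → x ≠ b → s' x = s x

section SeparableConcave

variable {ι : Type*} {L : Finset ι} {f : ι → ℕ → ℝ}

theorem sum_le_of_no_improving_transfer (hf : ∀ x ∈ L, Antitone fun n => f x (n + 1) - f x n)
    {s : ι → ℕ}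
    (hs : ∀ a ∈ L, ∀ b ∈ L, a ≠ b → 0 < s b →
      f a (s a + 1) - f a (s a) ≤ f b (s b) - f b (s b - 1))
    {s' : ι → ℕ} (hsum : ∑ x ∈ L, s' x = ∑ x ∈ L, s x) :
    ∑ x ∈ L, f x (s' x) ≤ ∑ x ∈ L, f x (s x) := by
  by_cases hdown : ∃ x ∈ L, s' x < s x
  swap
  · push Not at hdown
    have := (sum_eq_sum_iff_of_le hdown).1 hsum.symm
    exact (sum_congr rfl fun x hx => by rw [this x hx]).le
  -- The smallest left marginal among the coordinates that `s'` lowers separates all marginals.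
  obtain ⟨b, hb, hbmin⟩ := exists_min_image (L.filter fun x => s' x < s x)
    (fun x => f x (s x) - f x (s x - 1)) (by simpa [Finset.Nonempty] using hdown)
  rw [mem_filter] at hb
  have hbound (x) (hx : x ∈ L) :
      f x (s' x) ≤ f x (s x) + ((s' x : ℝ) - s x) * (f b (s b) - f b (s b - 1)) := by
    refine le_add_sub_mul_of_supergradient (hf x hx) (fun hle => ?_) fun hlt => ?_
    · exact hs x hx b hb.1 (by rintro rfl; omega) (by omega)
    · exact hbmin x (mem_filter.2 ⟨hx, hlt⟩)
  have hsum' : ∑ x ∈ L, ((s' x : ℝ) - s x) = 0 := by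
    rw [sum_sub_distrib, ← Nat.cast_sum, ← Nat.cast_sum, hsum, sub_self]
  calc ∑ x ∈ L, f x (s' x)
      ≤ ∑ x ∈ L, (f x (s x) + ((s' x : ℝ) - s x) * (f b (s b) - f b (s b - 1))) :=
        sum_le_sum hbound
    _ = ∑ x ∈ L, f x (s x) := by rw [sum_add_distrib, ← sum_mul, hsum', zero_mul, add_zero]

lemma sum_apply_update_update_add [DecidableEq ι] {M : Type*} [AddCommMonoid M]
    (g : ι → ℕ → M) (s : ι → ℕ) {a b : ι} (ha : a ∈ L) (hb : b ∈ L) (hab : a ≠ b) (u v : ℕ) :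
    ∑ x ∈ L, g x (Function.update (Function.update s a u) b v x) + (g a (s a) + g b (s b))
      = ∑ x ∈ L, g x (s x) + (g a u + g b v) := by
  have ha' : a ∈ L.erase b := mem_erase.2 ⟨hab, ha⟩
  rw [← add_sum_erase L _ hb, ← add_sum_erase _ _ ha', ← add_sum_erase L _ hb,
    ← add_sum_erase _ _ ha']
  simp only [Function.update_self, Function.update_of_ne hab]
  rw [sum_congr rfl fun x hx => by
    rw [Function.update_of_ne (ne_of_mem_erase (mem_of_mem_erase hx)),
      Function.update_of_ne (ne_of_mem_erase hx)]]
  abel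

theorem exists_improving_unitTransfer (hf : ∀ x ∈ L, Antitone fun n => f x (n + 1) - f x n)
    {s : ι → ℕ} (hs : ∃ s' : ι → ℕ, ∑ x ∈ L, s' x = ∑ x ∈ L, s x ∧
      ∑ x ∈ L, f x (s x) < ∑ x ∈ L, f x (s' x)) :
    ∃ s', ∑ x ∈ L, s' x = ∑ x ∈ L, s x ∧ IsUnitTransfer L s s' ∧
      ∑ x ∈ L, f x (s x) < ∑ x ∈ L, f x (s' x) := by
  classical
  obtain ⟨a, ha, b, hb, hab, hsb, hgain⟩ : ∃ a ∈ L, ∃ b ∈ L, a ≠ b ∧ 0 < s b ∧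
      f b (s b) - f b (s b - 1) < f a (s a + 1) - f a (s a) := by
    by_contra! hno
    obtain ⟨s', hsum, hlt⟩ := hs
    exact (sum_le_of_no_improving_transfer hf hno hsum).not_gt hlt
  refine ⟨Function.update (Function.update s a (s a + 1)) b (s b - 1), ?_,
    ⟨a, ha, b, hb, hab, ?_, ?_, fun x hxa hxb => ?_⟩, ?_⟩
  · have := sum_apply_update_update_add (fun _ n => n) s ha hb hab (s a + 1) (s b - 1)
    omega
  · rw [Function.update_of_ne hab, Function.update_self]
  · simp only [Function.update_self]
    omega
  · rw [Function.update_of_ne hxb, Function.update_of_ne hxa]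
  · linarith [sum_apply_update_update_add f s ha hb hab (s a + 1) (s b - 1)]

end SeparableConcave

theorem exists_chain_of_exists_improving_step {α β : Type*} [LinearOrder β] {P : α → Prop}
    {R : α → α → Prop} (F : α → β) (hfin : (F '' {x | P x}).Finite)
    (hstep : ∀ x, P x → (∃ y, P y ∧ F x < F y) → ∃ y, P y ∧ R x y ∧ F x < F y)
    {x : α} (hx : P x) :
    ∃ n : ℕ, ∃ c : ℕ → α, c 0 = x ∧ (∀ i ≤ n, P (c i)) ∧ (∀ i < n, R (c i) (c (i + 1))) ∧
      (∀ i < n, F (c i) < F (c (i + 1))) ∧ ∀ y, P y → F y ≤ F (c n) := by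
  have hwf : {x | P x}.WellFoundedOn fun y z => F z < F y :=
    Set.wellFoundedOn_image.1 (hfin.wellFoundedOn (r := (· > ·)))
  lift x to {x | P x} using hx
  induction x using WellFounded.induction hwf with
  | h x ih =>
  obtain ⟨x, hx⟩ := x
  by_cases hmax : ∃ y, P y ∧ F x < F y
  · obtain ⟨y, hy, hxy, hlt⟩ := hstep x hx hmax
    obtain ⟨n, c, rfl, hP, hR, hF, hc⟩ := ih ⟨y, hy⟩ hlt
    refine ⟨n + 1, fun | 0 => x | i + 1 => c i, rfl, ?_, ?_, ?_, hc⟩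
    · rintro (_ | i) hi
      exacts [hx, hP i (by omega)]
    · rintro (_ | i) hi
      exacts [hxy, hR i (by omega)]
    · rintro (_ | i) hi
      exacts [hlt, hF i (by omega)]
  · push Not at hmax
    exact ⟨0, fun _ => x, rfl, fun _ _ => hx, by simp, by simp, hmax⟩

lemma finite_image_sum_apply {ι : Type*} (L : Finset ι) (f : ι → ℕ → ℝ) (n : ℕ) :
    ((fun s : ι → ℕ => ∑ x ∈ L, f x (s x)) '' {s | ∑ x ∈ L, s x = n}).Finite := by
  refine (Set.finite_range fun g : L → Fin (n + 1) => ∑ x : L, f x (g x)).subset ?_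
  rintro _ ⟨s, hs, rfl⟩
  refine ⟨fun x => ⟨s x, Nat.lt_succ_of_le ?_⟩, sum_coe_sort L fun x => f x (s x)⟩
  exact (show ∑ x ∈ L, s x = n from hs) ▸ single_le_sum (fun _ _ => Nat.zero_le _) x.2

theorem stmt16_general {ι : Type*} (p : ℝ) (hp0 : 0 < p) (hp1 : p < 1)
    (L : Finset ι) (r : ι → ℕ) (tmax : ℕ)
    (t : ι → ℕ) (hfeas : (∑ b ∈ L, t b) = tmax) :
    ∃ n : ℕ, ∃ c : ℕ → ι → ℕ,
      c 0 = t ∧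
      (∀ i ≤ n, (∑ b ∈ L, c i b) = tmax) ∧
      (∀ i < n, ∃ a ∈ L, ∃ b ∈ L, a ≠ b ∧
        c (i + 1) a = c i a + 1 ∧ c i b = c (i + 1) b + 1 ∧
        (∀ x, x ≠ a → x ≠ b → c (i + 1) x = c i x)) ∧
      (∀ i < n, ∑ b ∈ L, expRank p (r b) (c i b) <
        ∑ b ∈ L, expRank p (r b) (c (i + 1) b)) ∧
      (∀ t' : ι → ℕ, (∑ b ∈ L, t' b) = tmax →
        ∑ b ∈ L, expRank p (r b) (t' b) ≤ ∑ b ∈ L, expRank p (r b) (c n b)) := by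
  have hconc (x : ι) (_ : x ∈ L) :
      Antitone fun n => expRank p (r x) (n + 1) - expRank p (r x) n :=
    expRank_succ_sub_antitone hp0.le hp1.le (r x)
  refine exists_chain_of_exists_improving_step (R := IsUnitTransfer L)
    (fun s => ∑ b ∈ L, expRank p (r b) (s b)) (finite_image_sum_apply L _ tmax)
    (fun s hs hopt => ?_) hfeas
  obtain ⟨s', hsum, hlt⟩ := hopt
  simpa only [hs] using exists_improving_unitTransfer hconc ⟨s', hsum.trans hs.symm, hlt⟩

theorem stmt16 {ι : Type*} (p : ℝ) (hp0 : 0 < p) (hp1 : p < 1)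
    (L : Finset ι) (r : ι → ℕ) (tmax : ℕ)
    (hlt : (∑ b ∈ L, r b) < tmax)
    (t : ι → ℕ) (hfeas : (∑ b ∈ L, t b) = tmax)
    (hnotopt : ¬ ∀ t' : ι → ℕ, (∑ b ∈ L, t' b) = tmax →
      ∑ b ∈ L, expRank p (r b) (t' b) ≤ ∑ b ∈ L, expRank p (r b) (t b)) :
    ∃ n : ℕ, ∃ c : ℕ → ι → ℕ,
      c 0 = t ∧
      (∀ i ≤ n, (∑ b ∈ L, c i b) = tmax) ∧
      (∀ i < n, ∃ a ∈ L, ∃ b ∈ L, a ≠ b ∧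
        c (i + 1) a = c i a + 1 ∧ c i b = c (i + 1) b + 1 ∧
        (∀ x, x ≠ a → x ≠ b → c (i + 1) x = c i x)) ∧
      (∀ i < n, ∑ b ∈ L, expRank p (r b) (c i b) <
        ∑ b ∈ L, expRank p (r b) (c (i + 1) b)) ∧
      (∀ t' : ι → ℕ, (∑ b ∈ L, t' b) = tmax →
        ∑ b ∈ L, expRank p (r b) (t' b) ≤ ∑ b ∈ L, expRank p (r b) (c n b)) :=
  stmt16_general p hp0 hp1 L r tmax t hfeas
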